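/- Let (Ω, 𝒜, μ) be a standard Borel probability space. For each n ≥ 0 let ~_n be an equivalence relation on Ω that is measurable as a subset of Ω × Ω, and let ~ be an equivalence relation on Ω, measurable as a subset of Ω × Ω, that is finer than every ~_n (i.e., x ~ y implies x ~_n y for all n). Assume (~_n) converges pointwise to ~: for all x, y ∈ Ω there exists N such that for all n ≥ N, x ~_n y if and only if x ~ y. For an equivalence relation σ with measurable graph, define H_μ(σ) = ∫_Ω −log₂ μ(σ[x]) dμ(x) ∈ [0, ∞], where σ[x] denotes the equivalence class of x and −log₂ 0 = +∞. Then H_μ(~_n) → H_μ(~) as n → ∞. -/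

import Mathlib

/-!
Write `relEnt μ r` as `∫⁻ x, φ (μ [x]_r) ∂μ` with `φ t = -log₂ t` (`φ 0 = ⊤`, truncated at `0`).
Through `ENNReal.log`, `φ` is continuous and antitone on all of `[0, ∞]`. The pointwise convergence
of the relations makes the class indicators converge, hence `μ [x]_{r n} → μ [x]_{rl}`, and so the
integrands converge pointwise. Since `[x]_{rl} ⊆ [x]_{r n}`, each integrand lies below the limit
integrand; Fatou's lemma then gives the lower bound and monotonicity of the integral the upper one.
-/

open MeasureTheory Filter Topology
open scoped ENNReal

namespace GalledB2

open Classical in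
/-- The entropy `H_μ(σ) = ∫ −log₂ μ(σ[x]) dμ(x) ∈ [0,∞]` of an equivalence relation
`σ` (given by the binary predicate `r`), with the convention `−log₂ 0 = +∞`. -/
noncomputable def relEnt {Ω : Type*} [MeasurableSpace Ω] (μ : Measure Ω)
    (r : Ω → Ω → Prop) : ℝ≥0∞ :=
  ∫⁻ x,
    (if μ {y | r x y} = 0 then (⊤ : ℝ≥0∞)
     else ENNReal.ofReal (- Real.logb 2 (μ {y | r x y}).toReal)) ∂μ

theorem tendsto_lintegral_of_tendsto_of_le_limit {α ι : Type*} [MeasurableSpace α]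
    {μ : Measure α} {u : Filter ι} [IsCountablyGenerated u] {f : ι → α → ℝ≥0∞} {g : α → ℝ≥0∞}
    (hf : ∀ i, AEMeasurable (f i) μ) (h_le : ∀ i, f i ≤ᵐ[μ] g)
    (h_lim : ∀ᵐ a ∂μ, Tendsto (fun i => f i a) u (𝓝 (g a))) :
    Tendsto (fun i => ∫⁻ a, f i a ∂μ) u (𝓝 (∫⁻ a, g a ∂μ)) := by
  rcases u.eq_or_neBot with rfl | _
  · exact tendsto_bot
  refine tendsto_of_le_liminf_of_limsup_le ?_ ?_
  · calc ∫⁻ a, g a ∂μ = ∫⁻ a, liminf (fun i => f i a) u ∂μ :=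
          lintegral_congr_ae (h_lim.mono fun a ha => ha.liminf_eq.symm)
      _ ≤ liminf (fun i => ∫⁻ a, f i a ∂μ) u := lintegral_liminf_le' hf
  · exact limsup_le_of_le (by isBoundedDefault)
      (Eventually.of_forall fun i => lintegral_mono_ae (h_le i))

noncomputable def negLogb2 (t : ℝ≥0∞) : ℝ≥0∞ :=
  if t = 0 then ⊤ else ENNReal.ofReal (-Real.logb 2 t.toReal)

theorem relEnt_eq_lintegral_negLogb2 {Ω : Type*} [MeasurableSpace Ω] (μ : Measure Ω)
    (r : Ω → Ω → Prop) : relEnt μ r = ∫⁻ x, negLogb2 (μ {y | r x y}) ∂μ :=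
  rfl

theorem negLogb2_eq_toENNReal (t : ℝ≥0∞) :
    negLogb2 t = (-ENNReal.log t * ((Real.log 2)⁻¹ : ℝ)).toENNReal := by
  have h2 : 0 < (Real.log 2)⁻¹ := inv_pos.2 (Real.log_pos one_lt_two)
  rcases eq_or_ne t 0 with rfl | h0
  · simp [negLogb2, EReal.top_mul_coe_of_pos h2]
  rcases eq_or_ne t ⊤ with rfl | htop
  · simp [negLogb2, EReal.bot_mul_coe_of_pos h2]
  simp [negLogb2, ENNReal.log, h0, htop, Real.logb, div_eq_mul_inv, ← EReal.coe_neg,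
    ← EReal.coe_mul]

theorem continuous_negLogb2 : Continuous negLogb2 := by
  have h2 : ((Real.log 2)⁻¹ : ℝ) ≠ 0 := inv_ne_zero (Real.log_pos one_lt_two).ne'
  have hmul : Continuous fun x : EReal => x * ((Real.log 2)⁻¹ : ℝ) :=
    continuous_iff_continuousAt.2 fun x => (EReal.continuousAt_mul (.inr (EReal.coe_ne_bot _))
      (.inr (EReal.coe_ne_top _)) (.inr (EReal.coe_ne_zero.2 h2))
      (.inr (EReal.coe_ne_zero.2 h2))).comp (continuous_id.prodMk continuous_const).continuousAt
  simp_rw [funext negLogb2_eq_toENNReal]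
  exact (hmul.comp (continuous_neg.comp ENNReal.continuous_log)).ereal_toENNReal

theorem antitone_negLogb2 : Antitone negLogb2 := by
  intro s t hst
  simp only [negLogb2_eq_toENNReal]
  exact EReal.toENNReal_le_toENNReal (mul_le_mul_of_nonneg_right
    (EReal.neg_le_neg_iff.2 (ENNReal.log_le_log hst))
    (EReal.coe_nonneg.2 (inv_pos.2 (Real.log_pos one_lt_two)).le))

theorem relEnt_tendsto_general {Ω : Type*} [MeasurableSpace Ω]
    (μ : Measure Ω) [IsProbabilityMeasure μ]
    (r : ℕ → Ω → Ω → Prop) (rl : Ω → Ω → Prop)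
    (hrmeas : ∀ n, MeasurableSet {p : Ω × Ω | r n p.1 p.2})
    (hfiner : ∀ n x y, rl x y → r n x y)
    (hconv : ∀ x y, ∃ N, ∀ n ≥ N, (r n x y ↔ rl x y)) :
    Tendsto (fun n => relEnt μ (r n)) atTop (𝓝 (relEnt μ rl)) := by
  have h_class : ∀ x, Tendsto (fun n => μ {y | r n x y}) atTop (𝓝 (μ {y | rl x y})) :=
    fun x => tendsto_measure_of_tendsto_indicator_of_isFiniteMeasure atTop μ
      (fun n => measurable_prodMk_left (hrmeas n)) fun y => eventually_atTop.2 (hconv x y)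
  simp only [relEnt_eq_lintegral_negLogb2]
  exact tendsto_lintegral_of_tendsto_of_le_limit
    (fun n => (continuous_negLogb2.measurable.comp
      (measurable_measure_prodMk_left (hrmeas n))).aemeasurable)
    (fun n => ae_of_all _ fun x => antitone_negLogb2 (measure_mono fun y => hfiner n x y))
    (ae_of_all _ fun x => (continuous_negLogb2.tendsto _).comp (h_class x))

/-- **Theorem.** On a standard Borel probability space, if the measurable equivalence
relations `r n` are all coarser than the measurable equivalence relation `rl` and
converge pointwise to it, then `H_μ(r n) → H_μ(rl)`. -/
theorem relEnt_tendsto {Ω : Type*} [MeasurableSpace Ω] [StandardBorelSpace Ω]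
    (μ : Measure Ω) [IsProbabilityMeasure μ]
    (r : ℕ → Ω → Ω → Prop) (rl : Ω → Ω → Prop)
    (hr : ∀ n, Equivalence (r n)) (hrl : Equivalence rl)
    (hrmeas : ∀ n, MeasurableSet {p : Ω × Ω | r n p.1 p.2})
    (hrlmeas : MeasurableSet {p : Ω × Ω | rl p.1 p.2})
    (hfiner : ∀ n x y, rl x y → r n x y)
    (hconv : ∀ x y, ∃ N, ∀ n ≥ N, (r n x y ↔ rl x y)) :
    Tendsto (fun n => relEnt μ (r n)) atTop (𝓝 (relEnt μ rl)) :=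
  relEnt_tendsto_general μ r rl hrmeas hfiner hconv

end GalledB2
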